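/- For every real k > 0 there exists a constant C_k such that for all ξ₀ ≥ 3 and all τ ≥ ξ₀, setting Ω(s) := (100 ln s + 9 (s−ξ₀)^{11/10})^{1/2} for s ≥ ξ₀, one has ∫_{ξ₀}^{τ} e^{−(2/5)(τ−s)} Ω(s)^{−k} ds ≤ C_k Ω(τ)^{−k}. -/

import Mathlib

/-!
Over a time step `τ - s` the radius grows at most linearly: `Ω(τ) ≤ 2 (1 + (τ - s)) Ω(s)`,
because `ln τ ≤ (1 + (τ - s)) ln s`, `x ↦ x ^ (11/10)` is subadditive up to a factor `2`, and
`ln s ≥ 1` absorbs the additive errors into `Ω(s)²`. Linear growth is slower than any exponential,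
so `Ω(s)^{-k} ≤ C e^{(τ - s)/5} Ω(τ)^{-k}`; the Duhamel kernel `e^{-(2/5)(τ - s)}` beats this
rate, and what is left is `C Ω(τ)^{-k} ∫ e^{-(τ - s)/5} ds ≤ 5 C Ω(τ)^{-k}`.
-/

/-- The radius `Ω(τ) = √(100 ln τ + 9 (τ - ξ₀)^{11/10})` of equation (2.6) of the paper. -/
noncomputable def Omega (ξ₀ τ : ℝ) : ℝ :=
  Real.sqrt (100 * Real.log τ + 9 * (τ - ξ₀) ^ ((11 : ℝ) / 10))

open Real Set

lemma Real.rpow_add_le_mul_rpow_add_rpow {p a b : ℝ} (ha : 0 ≤ a) (hb : 0 ≤ b)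
    (hp : 1 ≤ p) :
    (a + b) ^ p ≤ 2 ^ (p - 1) * (a ^ p + b ^ p) := by
  have := NNReal.rpow_add_le_mul_rpow_add_rpow ⟨a, ha⟩ ⟨b, hb⟩ hp
  exact_mod_cast this

lemma one_add_le_mul_exp_div {c d : ℝ} (hc : 0 < c) (hd : 0 ≤ d) :
    1 + d ≤ (1 + c) * exp (d / c) :=
  calc 1 + d ≤ (1 + c) * (d / c + 1) := by
        rw [mul_add, mul_one, add_mul, one_mul, mul_div_cancel₀ d hc.ne']
        have : 0 ≤ d / c := by positivity
        linarith
    _ ≤ (1 + c) * exp (d / c) := by gcongr; exact add_one_le_exp _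

lemma log_le_one_add_mul_log {s τ : ℝ} (hs : exp 1 ≤ s) (hsτ : s ≤ τ) :
    log τ ≤ (1 + (τ - s)) * log s := by
  have hs1 : 1 ≤ s := (one_le_exp zero_le_one).trans hs
  have hlog : 1 ≤ log s := by rwa [le_log_iff_exp_le (by linarith)]
  have hs0 : 0 < s := by linarith
  have hτ0 : 0 < τ := by linarith
  have hquot : log τ - log s ≤ τ - s :=
    calc log τ - log s = log (τ / s) := (log_div hτ0.ne' hs0.ne').symm
      _ ≤ τ / s - 1 := log_le_sub_one_of_pos (by positivity)
      _ = (τ - s) / s := by field_simp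
      _ ≤ τ - s := div_le_self (by linarith) hs1
  nlinarith

lemma integral_exp_neg_mul_sub_le {ν a b : ℝ} (hν : 0 < ν) :
    ∫ s in a..b, exp (-ν * (b - s)) ≤ 1 / ν := by
  have hderiv : ∀ s ∈ uIcc a b,
      HasDerivAt (fun s => exp (-ν * (b - s)) / ν) (exp (-ν * (b - s))) s := by
    intro s _
    refine ((((hasDerivAt_id' s).const_sub b).const_mul (-ν)).exp.div_const ν).congr_deriv ?_
    field_simp
  rw [intervalIntegral.integral_eq_sub_of_hasDerivAt hderiv
    (by apply Continuous.intervalIntegrable; fun_prop)]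
  have : 0 < exp (-ν * (b - a)) / ν := by positivity
  simp only [sub_self, mul_zero, exp_zero]
  linarith

lemma integral_exp_mul_le_of_le_mul_exp {φ : ℝ → ℝ} {a b M γ δ : ℝ} (hab : a ≤ b) (hγδ : γ < δ)
    (hM : 0 ≤ M) (hφb : 0 ≤ φ b) (hφ : ContinuousOn φ (Icc a b))
    (hle : ∀ s ∈ Icc a b, φ s ≤ M * exp (γ * (b - s)) * φ b) :
    ∫ s in a..b, exp (-δ * (b - s)) * φ s ≤ M / (δ - γ) * φ b := by
  have hpoint : ∀ s ∈ Icc a b,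
      exp (-δ * (b - s)) * φ s ≤ M * φ b * exp (-(δ - γ) * (b - s)) := fun s hs =>
    calc exp (-δ * (b - s)) * φ s ≤ exp (-δ * (b - s)) * (M * exp (γ * (b - s)) * φ b) := by
          gcongr; exact hle s hs
      _ = M * φ b * exp (-(δ - γ) * (b - s)) := by
          rw [show -(δ - γ) * (b - s) = -δ * (b - s) + γ * (b - s) by ring, exp_add]; ring
  calc ∫ s in a..b, exp (-δ * (b - s)) * φ s
      ≤ ∫ s in a..b, M * φ b * exp (-(δ - γ) * (b - s)) :=
        intervalIntegral.integral_mono_on hab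
          (((by fun_prop : Continuous fun s => exp (-δ * (b - s))).continuousOn.mul hφ
            ).intervalIntegrable_of_Icc hab)
          (by apply Continuous.intervalIntegrable; fun_prop) hpoint
    _ = M * φ b * ∫ s in a..b, exp (-(δ - γ) * (b - s)) := intervalIntegral.integral_const_mul _ _
    _ ≤ M * φ b * (1 / (δ - γ)) := by
        gcongr; exact integral_exp_neg_mul_sub_le (sub_pos.2 hγδ)
    _ = M / (δ - γ) * φ b := by ring

lemma Omega_pos {ξ₀ s : ℝ} (hξ₀ : 1 < ξ₀) (hs : ξ₀ ≤ s) : 0 < Omega ξ₀ s := by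
  have : 0 < log s := log_pos (by linarith)
  have : 0 ≤ (s - ξ₀) ^ ((11 : ℝ) / 10) := rpow_nonneg (by linarith) _
  exact sqrt_pos.2 (by linarith)

lemma continuousAt_Omega (ξ₀ : ℝ) {s : ℝ} (hs : s ≠ 0) : ContinuousAt (Omega ξ₀) s := by
  unfold Omega
  fun_prop (disch := first | exact hs | norm_num)

lemma Omega_le_mul_Omega {ξ₀ s τ : ℝ} (hξ₀ : 3 ≤ ξ₀) (hs : ξ₀ ≤ s) (hsτ : s ≤ τ) :
    Omega ξ₀ τ ≤ 2 * (1 + (τ - s)) * Omega ξ₀ s := by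
  set d := τ - s
  have hd : 0 ≤ d := sub_nonneg.2 hsτ
  have hlog_τ : log τ ≤ (1 + d) * log s :=
    log_le_one_add_mul_log (by linarith [exp_one_lt_d9]) hsτ
  have hlog_s : 1 ≤ log s := by
    rw [le_log_iff_exp_le (by linarith)]; linarith [exp_one_lt_d9]
  have hsplit : (τ - ξ₀) ^ ((11 : ℝ) / 10) ≤ 2 * ((s - ξ₀) ^ ((11 : ℝ) / 10) + (1 + d) ^ 2) :=
    calc (τ - ξ₀) ^ ((11 : ℝ) / 10)
        = ((s - ξ₀) + d) ^ ((11 : ℝ) / 10) := by simp only [d]; ring_nf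
      _ ≤ 2 ^ ((11 : ℝ) / 10 - 1) * ((s - ξ₀) ^ ((11 : ℝ) / 10) + d ^ ((11 : ℝ) / 10)) :=
        rpow_add_le_mul_rpow_add_rpow (by linarith) hd (by norm_num)
      _ ≤ 2 ^ (1 : ℝ) * ((s - ξ₀) ^ ((11 : ℝ) / 10) + (1 + d) ^ (2 : ℝ)) := by
        have hd_rpow : d ^ ((11 : ℝ) / 10) ≤ (1 + d) ^ (2 : ℝ) :=
          (rpow_le_rpow hd (by linarith : d ≤ 1 + d) (by norm_num)).trans
            (rpow_le_rpow_of_exponent_le (by linarith) (by norm_num))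
        gcongr <;> norm_num
      _ = 2 * ((s - ξ₀) ^ ((11 : ℝ) / 10) + (1 + d) ^ 2) := by norm_cast
  have hU : 0 ≤ (s - ξ₀) ^ ((11 : ℝ) / 10) := rpow_nonneg (by linarith) _
  unfold Omega
  rw [← sqrt_sq (by positivity : 0 ≤ 2 * (1 + d)), ← sqrt_mul (by positivity)]
  gcongr
  nlinarith [sq_nonneg d, mul_nonneg hd (sub_nonneg.2 hlog_s), mul_nonneg (sq_nonneg d) hU,
    mul_nonneg hd hU, mul_nonneg (sq_nonneg d) (sub_nonneg.2 hlog_s)]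

lemma Omega_rpow_neg_le {k ξ₀ s τ : ℝ} (hk : 0 < k) (hξ₀ : 3 ≤ ξ₀) (hs : ξ₀ ≤ s) (hsτ : s ≤ τ) :
    Omega ξ₀ s ^ (-k) ≤ (2 * (1 + 5 * k)) ^ k * exp (1 / 5 * (τ - s)) * Omega ξ₀ τ ^ (-k) := by
  have hΩs := Omega_pos (by linarith) hs
  have hΩτ := Omega_pos (by linarith) (hs.trans hsτ)
  -- `c = 5 k` in `one_add_le_mul_exp_div` turns the growth rate of `Ω ^ k` into `1/5 < 2/5`.
  have hgrowth : Omega ξ₀ τ ≤ 2 * (1 + 5 * k) * exp ((τ - s) / (5 * k)) * Omega ξ₀ s :=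
    calc Omega ξ₀ τ ≤ 2 * (1 + (τ - s)) * Omega ξ₀ s := Omega_le_mul_Omega hξ₀ hs hsτ
      _ ≤ 2 * ((1 + 5 * k) * exp ((τ - s) / (5 * k))) * Omega ξ₀ s := by
        gcongr; exact one_add_le_mul_exp_div (by positivity) (by linarith)
      _ = _ := by ring
  have hgrowth_k :
      Omega ξ₀ τ ^ k ≤ (2 * (1 + 5 * k)) ^ k * exp (1 / 5 * (τ - s)) * Omega ξ₀ s ^ k :=
    calc Omega ξ₀ τ ^ k ≤ (2 * (1 + 5 * k) * exp ((τ - s) / (5 * k)) * Omega ξ₀ s) ^ k := by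
          gcongr
      _ = _ := by
        rw [mul_rpow (by positivity) hΩs.le, mul_rpow (by positivity) (exp_nonneg _), ← exp_mul]
        congr 3
        field_simp
  rw [rpow_neg hΩs.le, rpow_neg hΩτ.le, ← div_eq_mul_inv, le_div_iff₀ (by positivity),
    inv_mul_eq_div, div_le_iff₀ (by positivity)]
  exact hgrowth_k

/-- first estimate in (4.4).
For every `k > 0` there is `C_k` such that for all `ξ₀ ≥ 3` and `τ ≥ ξ₀`,
`∫_{ξ₀}^{τ} e^{-(2/5)(τ-s)} Ω(s)^{-k} ds ≤ C_k Ω(τ)^{-k}`. -/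
theorem duhamel_Omega_decay (k : ℝ) (hk : 0 < k) :
    ∃ C : ℝ, ∀ ξ₀ : ℝ, 3 ≤ ξ₀ → ∀ τ : ℝ, ξ₀ ≤ τ →
      (∫ s in ξ₀..τ, Real.exp (-(2 / 5) * (τ - s)) * (Omega ξ₀ s) ^ (-k)) ≤
        C * (Omega ξ₀ τ) ^ (-k) := by
  refine ⟨5 * (2 * (1 + 5 * k)) ^ k, fun ξ₀ hξ₀ τ hτ => ?_⟩
  have hcont : ContinuousOn (fun s => Omega ξ₀ s ^ (-k)) (Icc ξ₀ τ) := fun s hs =>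
    ((continuousAt_Omega ξ₀ (by linarith [hs.1])).rpow_const
      (Or.inl (Omega_pos (by linarith) hs.1).ne')).continuousWithinAt
  refine (integral_exp_mul_le_of_le_mul_exp (φ := fun s => Omega ξ₀ s ^ (-k)) (γ := 1 / 5) hτ
    (by norm_num) (by positivity) (rpow_nonneg (Omega_pos (by linarith) hτ).le _) hcont
    fun s hs => Omega_rpow_neg_le hk hξ₀ hs.1 hs.2).trans_eq ?_
  ring
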